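/- arXiv:2106.10394 — 7 statements merged into one kernel-verified Lean document; each statement's English description precedes it below -/
import Mathlib

section
/- Let (D, c) be a binary decision problem with posterior probability q, and let ε > 0, δ > 0. Suppose there exists p_c > 0 such that P(q(X) ∈ (c, c + ε]) ≥ p_c·ε and P(q(X) ∈ [c − ε, c)) ≥ p_c·ε. Let (x_1, ŷ_1), ..., (x_m, ŷ_m) be a sample of size m from the Bayes optimal rule h(x) = 1{q(x) ≥ c}, and let ĉ be any value satisfying q(x_i) ≥ ĉ ⟺ ŷ_i = 1 for all i. If m ≥ log(2/δ)/(p_c·ε), then with probability at least 1 − δ over the sample, |ĉ − c| ≤ ε. -/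
open MeasureTheory ProbabilityTheory Set

noncomputable section

/-- The loss with false-positive cost `c` and false-negative cost `1 - c`
(`true` encodes the decision/label `1`, `false` encodes `0`). -/
def idtLoss (c : ℝ) (yhat y : Bool) : ℝ :=
  if yhat = y then 0 else if yhat = true then c else 1 - c

/-- The risk of decision rule `h` on distribution `D` with loss parameter `c`. -/
def risk {X : Type*} [MeasurableSpace X] (D : Measure (X × Bool)) (c : ℝ) (h : X → Bool) : ℝ :=
  ∫ p, idtLoss c (h p.1) p.2 ∂D

/-- `q` is a version of the posterior probability `x ↦ P(Y = 1 ∣ X = x)` for `D`. -/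
def IsPosterior {X : Type*} [MeasurableSpace X] (D : Measure (X × Bool)) (q : X → ℝ) : Prop :=
  Measurable q ∧ ∀ A : Set X, MeasurableSet A →
    ∫ x in A, q x ∂(D.map Prod.fst) = (D (A ×ˢ ({true} : Set Bool))).toReal

/-- IDT for an optimal decision maker: sample complexity upper bound. -/
theorem stmt_3 {X : Type*} [MeasurableSpace X]
    (D : Measure (X × Bool)) [IsProbabilityMeasure D]
    (c : ℝ) (hc : c ∈ Set.Ioo (0 : ℝ) 1)
    (q : X → ℝ) (hq : IsPosterior D q)
    (ε δ p_c : ℝ) (hε : 0 < ε) (hδ : 0 < δ) (hpc : 0 < p_c)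
    (hupper : ENNReal.ofReal (p_c * ε) ≤
      D.map Prod.fst {x | q x ∈ Set.Ioc c (c + ε)})
    (hlower : ENNReal.ofReal (p_c * ε) ≤
      D.map Prod.fst {x | q x ∈ Set.Ico (c - ε) c})
    (m : ℕ) (hm : Real.log (2 / δ) / (p_c * ε) ≤ (m : ℝ)) :
    ENNReal.ofReal (1 - δ) ≤
      (Measure.pi fun _ : Fin m => D.map Prod.fst)
        {xs | ∀ chat : ℝ,
          (∀ i, chat ≤ q (xs i) ↔ (decide (c ≤ q (xs i)) = true)) →
          |chat - c| ≤ ε} := by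
  obtain ⟨hqm, -⟩ := hq
  set μ := D.map Prod.fst with hμ
  have hμprob : IsProbabilityMeasure μ :=
    Measure.isProbabilityMeasure_map measurable_fst.aemeasurable
  set A : Set X := {x | q x ∈ Set.Ioc c (c + ε)} with hA
  set B : Set X := {x | q x ∈ Set.Ico (c - ε) c} with hB
  have hAm : MeasurableSet A := hqm measurableSet_Ioc
  have hBm : MeasurableSet B := hqm measurableSet_Ico
  set t := p_c * ε with ht
  have ht0 : 0 < t := mul_pos hpc hε
  have ht1 : t ≤ 1 := by
    have : ENNReal.ofReal t ≤ 1 := le_trans hupper (prob_le_one)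
    exact (ENNReal.ofReal_le_one).mp this
  set P := (Measure.pi fun _ : Fin m => μ) with hP
  -- good event
  set G : Set (Fin m → X) := {xs | (∃ i, xs i ∈ A) ∧ ∃ j, xs j ∈ B} with hG
  have hsub : G ⊆ {xs | ∀ chat : ℝ,
      (∀ i, chat ≤ q (xs i) ↔ (decide (c ≤ q (xs i)) = true)) →
      |chat - c| ≤ ε} := by
    rintro xs ⟨⟨i, hi⟩, ⟨j, hj⟩⟩ chat hchat
    simp only [decide_eq_true_eq] at hchat
    obtain ⟨hi1, hi2⟩ := hi
    obtain ⟨hj1, hj2⟩ := hj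
    have h1 : chat ≤ q (xs i) := (hchat i).mpr hi1.le
    have h2 : ¬ chat ≤ q (xs j) := fun h => not_le.mpr hj2 ((hchat j).mp h)
    rw [abs_le]
    constructor <;> nlinarith [not_le.mp h2]
  have hGcAm : MeasurableSet {xs : Fin m → X | ∀ i, xs i ∈ Aᶜ} := by
    have : {xs : Fin m → X | ∀ i, xs i ∈ Aᶜ} = Set.pi Set.univ (fun _ => Aᶜ) := by
      ext xs; simp [Set.mem_pi]
    rw [this]
    exact MeasurableSet.univ_pi (fun _ => hAm.compl)
  have hGcBm : MeasurableSet {xs : Fin m → X | ∀ j, xs j ∈ Bᶜ} := by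
    have : {xs : Fin m → X | ∀ j, xs j ∈ Bᶜ} = Set.pi Set.univ (fun _ => Bᶜ) := by
      ext xs; simp [Set.mem_pi]
    rw [this]
    exact MeasurableSet.univ_pi (fun _ => hBm.compl)
  have hGm : MeasurableSet G := by
    have : G = {xs : Fin m → X | ∀ i, xs i ∈ Aᶜ}ᶜ ∩ {xs : Fin m → X | ∀ j, xs j ∈ Bᶜ}ᶜ := by
      ext xs
      simp only [hG, Set.mem_setOf_eq, Set.mem_inter_iff, Set.mem_compl_iff, not_forall]
      tauto
    rw [this]
    exact (hGcAm.compl).inter (hGcBm.compl)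
  -- bound on each bad event
  have key : ∀ (C : Set X), MeasurableSet C → ENNReal.ofReal t ≤ μ C →
      P {xs : Fin m → X | ∀ i, xs i ∈ Cᶜ} ≤ ENNReal.ofReal (δ / 2) := by
    intro C hCm hCμ
    have hpi : {xs : Fin m → X | ∀ i, xs i ∈ Cᶜ} = Set.pi Set.univ (fun _ => Cᶜ) := by
      ext xs; simp [Set.mem_pi]
    have hcompl : μ Cᶜ ≤ ENNReal.ofReal (1 - t) := by
      rw [prob_compl_eq_one_sub hCm]
      calc 1 - μ C ≤ 1 - ENNReal.ofReal t := tsub_le_tsub_left hCμ 1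
        _ = ENNReal.ofReal 1 - ENNReal.ofReal t := by rw [ENNReal.ofReal_one]
        _ = ENNReal.ofReal (1 - t) := (ENNReal.ofReal_sub 1 ht0.le).symm
    have hexp : (1 - t) ^ m ≤ δ / 2 := by
      have h1 : (1 - t) ^ m ≤ Real.exp (-t) ^ m := by
        apply pow_le_pow_left₀ (by linarith) _ m
        linarith [Real.add_one_le_exp (-t)]
      have h2 : Real.exp (-t) ^ m = Real.exp (-(t * m)) := by
        rw [← Real.exp_nat_mul]; ring_nf
      have h3 : Real.log (2 / δ) ≤ t * m := by
        rw [div_le_iff₀ ht0] at hm; linarith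
      have h4 : Real.exp (-(t * m)) ≤ δ / 2 := by
        rw [← Real.exp_log (show (0:ℝ) < δ / 2 by linarith)]
        apply Real.exp_le_exp.mpr
        have : Real.log (δ / 2) = - Real.log (2 / δ) := by
          rw [← Real.log_inv]; norm_num
        linarith [this]
      calc (1 - t) ^ m ≤ Real.exp (-t) ^ m := h1
        _ = Real.exp (-(t * m)) := h2
        _ ≤ δ / 2 := h4
    calc P {xs : Fin m → X | ∀ i, xs i ∈ Cᶜ}
        = ∏ _i : Fin m, μ Cᶜ := by rw [hpi, Measure.pi_pi]
      _ = (μ Cᶜ) ^ m := by rw [Finset.prod_const, Finset.card_univ, Fintype.card_fin]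
      _ ≤ (ENNReal.ofReal (1 - t)) ^ m := pow_le_pow_left' hcompl m
      _ = ENNReal.ofReal ((1 - t) ^ m) := (ENNReal.ofReal_pow (by linarith) m).symm
      _ ≤ ENNReal.ofReal (δ / 2) := ENNReal.ofReal_le_ofReal hexp
  have hGc : P Gᶜ ≤ ENNReal.ofReal δ := by
    have hcover : Gᶜ ⊆ {xs : Fin m → X | ∀ i, xs i ∈ Aᶜ} ∪ {xs : Fin m → X | ∀ j, xs j ∈ Bᶜ} := by
      intro xs hxs
      simp only [hG, Set.mem_compl_iff, Set.mem_setOf_eq, not_and_or, not_exists] at hxs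
      rcases hxs with h | h
      · left; exact h
      · right; exact h
    calc P Gᶜ ≤ P ({xs : Fin m → X | ∀ i, xs i ∈ Aᶜ} ∪ {xs : Fin m → X | ∀ j, xs j ∈ Bᶜ}) :=
          measure_mono hcover
      _ ≤ P {xs : Fin m → X | ∀ i, xs i ∈ Aᶜ} + P {xs : Fin m → X | ∀ j, xs j ∈ Bᶜ} :=
          measure_union_le _ _
      _ ≤ ENNReal.ofReal (δ / 2) + ENNReal.ofReal (δ / 2) :=
          add_le_add (key A hAm hupper) (key B hBm hlower)
      _ = ENNReal.ofReal δ := by rw [← ENNReal.ofReal_add (by linarith) (by linarith)]; norm_num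
  have hGfin : ENNReal.ofReal (1 - δ) ≤ P G := by
    rw [prob_compl_eq_one_sub hGm] at hGc
    have : ENNReal.ofReal (1 - δ) ≤ 1 - ENNReal.ofReal δ := by
      rw [← ENNReal.ofReal_one, ← ENNReal.ofReal_sub 1 hδ.le]
    calc ENNReal.ofReal (1 - δ) ≤ 1 - ENNReal.ofReal δ := this
      _ ≤ 1 - (1 - P G) := tsub_le_tsub_left hGc 1
      _ ≤ P G := tsub_tsub_le
  exact hGfin.trans (measure_mono hsub)
end
end

section
/- Let H be a hypothesis class whose optimal subset opt_D(H) is monotone, let 0 < c < c' < 1, and let h_c ∈ argmin_{h∈H} R_c(h) and h_{c'} ∈ argmin_{h∈H} R_{c'}(h) be optimal rules in H for loss parameters c and c'. If P(h_c(X) ≠ h_{c'}(X)) > 0, then h_{c'}(x) ≤ h_c(x) for every x ∈ X, P(h_c(X) = 1 ∧ h_{c'}(X) = 0) > 0, and c ≤ P(Y = 1 | h_c(X) = 1 ∧ h_{c'}(X) = 0) ≤ c'. -/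
/-! For rules `h' ≤ h` the risks differ only on `A = {h = 1, h' = 0}`:
`R_c(h) - R_c(h') = c · P(A) - P(A ∧ Y = 1)`. Optimality of `h_c` against `h_{c'}` and of
`h_{c'}` against `h_c` therefore sandwiches `P(A ∧ Y = 1)` between `c · P(A)` and `c' · P(A)`.
Monotonicity of the optimal subset makes `h_c` and `h_{c'}` comparable, and if `h_c ≤ h_{c'}`
the same computation with the roles exchanged gives `c' · P(A) ≤ c · P(A)`, so `P(A) = 0`:
the two rules would agree almost surely. -/

open MeasureTheory ProbabilityTheory Set

noncomputable section

/-- A hypothesis class is monotone if any two of its members are pointwise comparable. -/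
def ClassMonotone {X : Type*} (H : Set (X → Bool)) : Prop :=
  ∀ h ∈ H, ∀ h' ∈ H, (∀ x, h' x ≤ h x) ∨ (∀ x, h x ≤ h' x)

/-- The optimal subset of a hypothesis class: rules that are risk-minimizers in `H`
for some loss parameter `c ∈ (0,1)`. -/
def optSubset {X : Type*} [MeasurableSpace X] (D : Measure (X × Bool))
    (H : Set (X → Bool)) : Set (X → Bool) :=
  {h | h ∈ H ∧ ∃ c ∈ Set.Ioo (0 : ℝ) 1, ∀ h' ∈ H, risk D c h ≤ risk D c h'}

/-- The induced posterior probability associated with a family `hfam` of optimal rules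
(`hfam c` optimal in the class for loss parameter `c`). -/
def inducedPosterior {X : Type*} (hfam : ℝ → (X → Bool)) (x : X) : ℝ :=
  sSup ({c | c ∈ Set.Icc (0 : ℝ) 1 ∧ hfam c x = true} ∪ {0})

lemma setOf_ne_eq_of_le {X : Type*} {h h' : X → Bool} (hle : ∀ x, h' x ≤ h x) :
    {x | h x ≠ h' x} = {x | h x = true ∧ h' x = false} := by
  ext x
  show h x ≠ h' x ↔ h x = true ∧ h' x = false
  have := hle x
  revert this
  cases h x <;> cases h' x <;> decide

section Risk

variable {X : Type*} [MeasurableSpace X] (D : Measure (X × Bool)) [IsFiniteMeasure D]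

lemma integrable_idtLoss (c : ℝ) {h : X → Bool} (hh : Measurable h) :
    Integrable (fun p : X × Bool => idtLoss c (h p.1) p.2) D := by
  refine .of_bound ((Measurable.of_discrete (f := fun q : Bool × Bool => idtLoss c q.1 q.2)).comp
    ((hh.comp measurable_fst).prodMk measurable_snd)).aestronglyMeasurable
    (|c| + |1 - c|) (.of_forall fun p => ?_)
  rcases h p.1 <;> rcases p.2 <;> simp [idtLoss] <;> positivity

lemma idtLoss_sub_idtLoss_of_le (c : ℝ) {b b' : Bool} (y : Bool) (hb : b' ≤ b) :
    idtLoss c b y - idtLoss c b' y =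
      (if b = true ∧ b' = false then c else 0) -
        (if y = true ∧ b = true ∧ b' = false then 1 else 0) := by
  rcases b <;> rcases b' <;> rcases y <;> simp [idtLoss, Bool.le_iff_imp] at hb ⊢

lemma risk_sub_risk_of_le (c : ℝ) {h h' : X → Bool} (hh : Measurable h) (hh' : Measurable h')
    (hle : ∀ x, h' x ≤ h x) :
    risk D c h - risk D c h' =
      c * D.real {p | h p.1 = true ∧ h' p.1 = false} -
        D.real {p | p.2 = true ∧ h p.1 = true ∧ h' p.1 = false} := by
  have hA : MeasurableSet {p : X × Bool | h p.1 = true ∧ h' p.1 = false} :=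
    (hh.comp measurable_fst (measurableSet_singleton true)).inter
      (hh'.comp measurable_fst (measurableSet_singleton false))
  have hT : MeasurableSet {p : X × Bool | p.2 = true ∧ h p.1 = true ∧ h' p.1 = false} :=
    (measurable_snd (measurableSet_singleton true)).inter hA
  have hpt : (fun p : X × Bool => idtLoss c (h p.1) p.2 - idtLoss c (h' p.1) p.2) =
      fun p => {p : X × Bool | h p.1 = true ∧ h' p.1 = false}.indicator (fun _ => c) p -
        {p : X × Bool | p.2 = true ∧ h p.1 = true ∧ h' p.1 = false}.indicator
          (fun _ => (1 : ℝ)) p := by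
    ext p
    simp only [idtLoss_sub_idtLoss_of_le c p.2 (hle p.1), indicator_apply, mem_ofPred_eq]
  rw [risk, risk, ← integral_sub (integrable_idtLoss D c hh) (integrable_idtLoss D c hh'), hpt,
    integral_sub ((integrable_const c).indicator hA) ((integrable_const 1).indicator hT),
    integral_indicator_const _ hA, integral_indicator_const _ hT, smul_eq_mul, smul_eq_mul,
    mul_one, mul_comm]

lemma mul_measureReal_le_and_le_mul_of_risk_le {a b : ℝ} {h h' : X → Bool} (hh : Measurable h)
    (hh' : Measurable h') (hle : ∀ x, h' x ≤ h x) (ha : risk D a h ≤ risk D a h')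
    (hb : risk D b h' ≤ risk D b h) :
    a * D.real {p | h p.1 = true ∧ h' p.1 = false} ≤
        D.real {p | p.2 = true ∧ h p.1 = true ∧ h' p.1 = false} ∧
      D.real {p | p.2 = true ∧ h p.1 = true ∧ h' p.1 = false} ≤
        b * D.real {p | h p.1 = true ∧ h' p.1 = false} := by
  have hda := risk_sub_risk_of_le D a hh hh' hle
  have hdb := risk_sub_risk_of_le D b hh hh' hle
  constructor <;> linarith

lemma measureReal_pos_of_map_fst_setOf_ne_pos {h h' : X → Bool} (hh : Measurable h)
    (hh' : Measurable h') (hle : ∀ x, h' x ≤ h x)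
    (hdis : 0 < D.map Prod.fst {x | h x ≠ h' x}) :
    0 < D.real {p | h p.1 = true ∧ h' p.1 = false} := by
  have hs : MeasurableSet {x | h x = true ∧ h' x = false} :=
    (hh (measurableSet_singleton true)).inter (hh' (measurableSet_singleton false))
  rw [setOf_ne_eq_of_le hle, Measure.map_apply measurable_fst hs] at hdis
  exact ENNReal.toReal_pos hdis.ne' (measure_ne_top D _)

lemma map_fst_setOf_ne_eq_zero_of_risk_le {a b : ℝ} (hba : b < a) {h h' : X → Bool}
    (hh : Measurable h) (hh' : Measurable h') (hle : ∀ x, h' x ≤ h x)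
    (ha : risk D a h ≤ risk D a h') (hb : risk D b h' ≤ risk D b h) :
    D.map Prod.fst {x | h x ≠ h' x} = 0 := by
  by_contra hdis
  have hpos := measureReal_pos_of_map_fst_setOf_ne_pos D hh hh' hle (pos_iff_ne_zero.2 hdis)
  obtain ⟨hlow, hup⟩ := mul_measureReal_le_and_le_mul_of_risk_le D hh hh' hle ha hb
  exact hba.not_ge (le_of_mul_le_mul_right (hlow.trans hup) hpos)

end Risk

/-- posterior probability between two optimal decision boundaries. -/
theorem stmt_4 {X : Type*} [MeasurableSpace X]
    (D : Measure (X × Bool)) [IsProbabilityMeasure D]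
    (H : Set (X → Bool)) (hmeas : ∀ h ∈ H, Measurable h)
    (hmono : ClassMonotone (optSubset D H))
    (c c' : ℝ) (hc : 0 < c) (hcc' : c < c') (hc' : c' < 1)
    (hc_ : X → Bool) (hc'_ : X → Bool)
    (hcmem : hc_ ∈ H) (hcopt : ∀ h' ∈ H, risk D c hc_ ≤ risk D c h')
    (hc'mem : hc'_ ∈ H) (hc'opt : ∀ h' ∈ H, risk D c' hc'_ ≤ risk D c' h')
    (hdis : 0 < D.map Prod.fst {x | hc_ x ≠ hc'_ x}) :
    (∀ x, hc'_ x ≤ hc_ x) ∧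
    0 < D.map Prod.fst {x | hc_ x = true ∧ hc'_ x = false} ∧
    c ≤ (D {p | p.2 = true ∧ hc_ p.1 = true ∧ hc'_ p.1 = false}).toReal /
          (D {p | hc_ p.1 = true ∧ hc'_ p.1 = false}).toReal ∧
    (D {p | p.2 = true ∧ hc_ p.1 = true ∧ hc'_ p.1 = false}).toReal /
          (D {p | hc_ p.1 = true ∧ hc'_ p.1 = false}).toReal ≤ c' := by
  have hmeas_c := hmeas hc_ hcmem
  have hmeas_c' := hmeas hc'_ hc'mem
  obtain hle | hge := hmono hc_ ⟨hcmem, c, ⟨hc, hcc'.trans hc'⟩, hcopt⟩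
    hc'_ ⟨hc'mem, c', ⟨hc.trans hcc', hc'⟩, hc'opt⟩
  · have hpos := measureReal_pos_of_map_fst_setOf_ne_pos D hmeas_c hmeas_c' hle hdis
    obtain ⟨hlow, hup⟩ := mul_measureReal_le_and_le_mul_of_risk_le D hmeas_c hmeas_c' hle
      (hcopt hc'_ hc'mem) (hc'opt hc_ hcmem)
    exact ⟨hle, setOf_ne_eq_of_le hle ▸ hdis, (le_div_iff₀ hpos).2 hlow,
      (div_le_iff₀ hpos).2 hup⟩
  · have hagree := map_fst_setOf_ne_eq_zero_of_risk_le D hcc' hmeas_c' hmeas_c hge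
      (hc'opt hc_ hcmem) (hcopt hc'_ hc'mem)
    simp only [ne_comm] at hagree
    exact absurd hagree hdis.ne'
end
end

section
/- Fix 0 < ε < 1/4, 0 < δ ≤ 1/2, and 0 < p_c ≤ 1/(8ε), and fix a sample size m. There exists a probability distribution D over [0,1] × {0,1} such that for every IDT algorithm ĉ : ([0,1] × {0,1})^m → (0,1) there exists a loss parameter c ∈ (0,1) with the following properties: P(q(X) ∈ (c, c + ε]) ≥ p_c·ε and P(q(X) ∈ [c − ε, c)) ≥ p_c·ε; and if m < log(1/(2δ))/(8·p_c·ε), then P(|ĉ(S) − c| ≥ ε) > δ, where S is a sample of size m from the Bayes optimal rule h(x) = 1{q(x) ≥ c}. -/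
/-!
Le Cam's two-point method. Take `q x = x` and a marginal with mass `p = p_c ε` within `ε` on
each side of both thresholds `1/4` and `1/4 + 2ε`, only `2p` of it inside `[1/4, 1/4 + 2ε)`.
A sample avoiding that interval, an event of probability `(1 - 2p)^m > 2δ`, is labelled alike by
both Bayes rules, so the algorithm returns the same estimate under both thresholds; as these are
`2ε` apart, the estimate is `ε`-far from one of them, which therefore fails with probability `> δ`.
-/

open MeasureTheory ProbabilityTheory Set

noncomputable section

section JointLaw

variable {X : Type*} [MeasurableSpace X]

def jointLaw (μ : Measure X) (q : X → ℝ) : Measure (X × Bool) :=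
  (μ.withDensity fun x => ENNReal.ofReal (q x)).map (·, true)
    + (μ.withDensity fun x => ENNReal.ofReal (1 - q x)).map (·, false)

variable {μ : Measure X} {q : X → ℝ}

theorem map_fst_jointLaw (hq : Measurable q) (hqI : ∀ x, q x ∈ Icc 0 1) :
    (jointLaw μ q).map Prod.fst = μ := by
  have hsum : ((fun x => ENNReal.ofReal (q x)) + fun x => ENNReal.ofReal (1 - q x)) = 1 := by
    ext x
    rw [Pi.add_apply, ← ENNReal.ofReal_add (hqI x).1 (sub_nonneg.2 (hqI x).2)]
    simp
  rw [jointLaw, Measure.map_add _ _ measurable_fst,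
    Measure.map_map measurable_fst (by fun_prop), Measure.map_map measurable_fst (by fun_prop)]
  simp only [Function.comp_def, Measure.map_id']
  rw [← withDensity_add_left hq.ennreal_ofReal, hsum, withDensity_one]

theorem jointLaw_apply_prod_true {A : Set X} (hA : MeasurableSet A) :
    jointLaw μ q (A ×ˢ {true}) = ∫⁻ x in A, ENNReal.ofReal (q x) ∂μ := by
  have hmeas : MeasurableSet (A ×ˢ ({true} : Set Bool)) := hA.prod (measurableSet_singleton _)
  rw [jointLaw, Measure.add_apply, Measure.map_apply (by fun_prop) hmeas,
    Measure.map_apply (by fun_prop) hmeas]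
  simp [withDensity_apply _ hA]

theorem isProbabilityMeasure_jointLaw [IsProbabilityMeasure μ] (hq : Measurable q)
    (hqI : ∀ x, q x ∈ Icc 0 1) : IsProbabilityMeasure (jointLaw μ q) := by
  constructor
  rw [← preimage_univ (f := Prod.fst), ← Measure.map_apply measurable_fst .univ,
    map_fst_jointLaw hq hqI, measure_univ]

theorem isPosterior_jointLaw (hq : Measurable q) (hqI : ∀ x, q x ∈ Icc 0 1) :
    IsPosterior (jointLaw μ q) q := by
  refine ⟨hq, fun A hA => ?_⟩
  rw [map_fst_jointLaw hq hqI, jointLaw_apply_prod_true hA,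
    integral_eq_lintegral_of_nonneg_ae (.of_forall fun x => (hqI x).1) hq.aestronglyMeasurable]

end JointLaw

theorem two_point_lower_bound {Ω : Type*} [MeasurableSpace Ω] (P : Measure Ω) {f g : Ω → ℝ}
    {E : Set Ω} (hfg : EqOn f g E) {a b ε δ : ℝ} (hab : 2 * ε ≤ |a - b|) (hδ : 0 ≤ δ)
    (hE : ENNReal.ofReal (2 * δ) < P E) :
    ENNReal.ofReal δ < P {ω | ε ≤ |f ω - a|} ∨ ENNReal.ofReal δ < P {ω | ε ≤ |g ω - b|} := by
  have hcover : E ⊆ {ω | ε ≤ |f ω - a|} ∪ {ω | ε ≤ |g ω - b|} := by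
    intro ω hω
    by_contra hout
    simp only [mem_union, mem_ofPred_eq, not_or, not_le, ← hfg hω] at hout
    have := abs_sub_le a (f ω) b
    rw [abs_sub_comm a (f ω)] at this
    linarith [hout.1, hout.2]
  by_contra! hle
  have : P E ≤ ENNReal.ofReal (2 * δ) := calc
    P E ≤ P {ω | ε ≤ |f ω - a|} + P {ω | ε ≤ |g ω - b|} :=
      (measure_mono hcover).trans (measure_union_le _ _)
    _ ≤ ENNReal.ofReal δ + ENNReal.ofReal δ := add_le_add hle.1 hle.2
    _ = ENNReal.ofReal (2 * δ) := by rw [← ENNReal.ofReal_add hδ hδ, two_mul]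
  exact this.not_gt hE

theorem exp_neg_four_mul_le_one_sub_two_mul {p : ℝ} (hp₀ : 0 ≤ p) (hp : 4 * p ≤ 1) :
    Real.exp (-(4 * p)) ≤ 1 - 2 * p := by
  have hpos : 0 < 1 - 2 * p := by linarith
  rw [← Real.le_log_iff_exp_le hpos]
  refine le_trans ?_ (Real.one_sub_inv_le_log_of_pos hpos)
  have : (1 - 2 * p)⁻¹ ≤ 1 + 4 * p := by
    rw [inv_le_iff_one_le_mul₀' hpos]; nlinarith
  linarith

theorem two_mul_lt_one_sub_two_mul_pow {p δ : ℝ} {m : ℕ} (hp₀ : 0 ≤ p) (hp : 4 * p ≤ 1)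
    (hδ : 0 < δ) (hm : m * (4 * p) < Real.log (1 / (2 * δ))) : 2 * δ < (1 - 2 * p) ^ m := calc
  2 * δ = Real.exp (-Real.log (1 / (2 * δ))) := by
    rw [one_div, Real.log_inv, neg_neg, Real.exp_log (by positivity)]
  _ < Real.exp (-(4 * p)) ^ m := by
    rw [← Real.exp_nat_mul, Real.exp_lt_exp]; linarith
  _ ≤ (1 - 2 * p) ^ m :=
    pow_le_pow_left₀ (Real.exp_nonneg _) (exp_neg_four_mul_le_one_sub_two_mul hp₀ hp) m

theorem ofReal_two_mul_lt_pi_univ_pi {X : Type*} [MeasurableSpace X] {μ : Measure X}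
    [SigmaFinite μ] {S : Set X} {p δ : ℝ} {m : ℕ} (hp₀ : 0 ≤ p) (hp : 4 * p ≤ 1) (hδ : 0 < δ)
    (hS : ENNReal.ofReal (1 - 2 * p) ≤ μ S) (hm : m * (4 * p) < Real.log (1 / (2 * δ))) :
    ENNReal.ofReal (2 * δ) < Measure.pi (fun _ : Fin m => μ) (univ.pi fun _ => S) := by
  rw [Measure.pi_pi, Finset.prod_const, Finset.card_univ, Fintype.card_fin]
  refine lt_of_lt_of_le ?_ (pow_le_pow_left₀ zero_le hS m)
  rw [← ENNReal.ofReal_pow (by linarith), ENNReal.ofReal_lt_ofReal_iff (pow_pos (by linarith) m)]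
  exact two_mul_lt_one_sub_two_mul_pow hp₀ hp hδ hm

theorem exists_measure_Icc_mass_near_thresholds {ε p : ℝ} (hε : 0 < ε) (hε' : ε < 1 / 4)
    (hp : 0 ≤ p) (hp' : 4 * p ≤ 1) :
    ∃ μ : Measure (Icc (0 : ℝ) 1), IsProbabilityMeasure μ ∧
      (∀ c ∈ ({1 / 4, 1 / 4 + 2 * ε} : Set ℝ), c ∈ Ioo 0 1 ∧
        ENNReal.ofReal p ≤ μ {x | (x : ℝ) ∈ Ioc c (c + ε)} ∧
        ENNReal.ofReal p ≤ μ {x | (x : ℝ) ∈ Ico (c - ε) c}) ∧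
      ENNReal.ofReal (1 - 2 * p) ≤ μ {x | 1 / 4 ≤ (x : ℝ) ↔ 1 / 4 + 2 * ε ≤ (x : ℝ)} := by
  let x₁ : Icc (0 : ℝ) 1 := ⟨1 / 4 - ε / 2, by constructor <;> linarith⟩
  let x₂ : Icc (0 : ℝ) 1 := ⟨1 / 4 + ε / 2, by constructor <;> linarith⟩
  let x₃ : Icc (0 : ℝ) 1 := ⟨1 / 4 + 3 * ε / 2, by constructor <;> linarith⟩
  let x₄ : Icc (0 : ℝ) 1 := ⟨1 / 4 + 5 * ε / 2, by constructor <;> linarith⟩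
  let μ := ENNReal.ofReal (1 - 3 * p) • Measure.dirac x₁ + ENNReal.ofReal p • Measure.dirac x₂
    + ENNReal.ofReal p • Measure.dirac x₃ + ENNReal.ofReal p • Measure.dirac x₄
  have atom_le (w : ℝ) (x : Icc (0 : ℝ) 1) (I : Set ℝ) (hx : (x : ℝ) ∈ I) :
      ENNReal.ofReal w ≤ (ENNReal.ofReal w • Measure.dirac x) {y | (y : ℝ) ∈ I} := by
    simp [Measure.dirac_apply_of_mem (s := {y : Icc (0 : ℝ) 1 | (y : ℝ) ∈ I}) hx]
  have hp₁ : ENNReal.ofReal p ≤ ENNReal.ofReal (1 - 3 * p) :=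
    ENNReal.ofReal_le_ofReal (by linarith)
  refine ⟨μ, ⟨?_⟩, ?_, ?_⟩
  · simp only [μ, Measure.coe_add, Measure.coe_smul, Pi.add_apply, Pi.smul_apply, measure_univ,
      smul_eq_mul, mul_one]
    rw [← ENNReal.ofReal_add (by linarith) hp, ← ENNReal.ofReal_add (by linarith) hp,
      ← ENNReal.ofReal_add (by linarith) hp]
    ring_nf
    exact ENNReal.ofReal_one
  · rintro c (rfl | rfl)
    · exact ⟨by norm_num,
        (atom_le p x₂ (Ioc _ _) (by dsimp only [x₂]; constructor <;> linarith)).trans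
          (Measure.le_add_right (Measure.le_add_right (Measure.le_add_left le_rfl)) _),
        (hp₁.trans (atom_le _ x₁ (Ico _ _) (by dsimp only [x₁]; constructor <;> linarith))).trans
          (Measure.le_add_right (Measure.le_add_right (Measure.le_add_right le_rfl)) _)⟩
    · exact ⟨⟨by linarith, by linarith⟩,
        (atom_le p x₄ (Ioc _ _) (by dsimp only [x₄]; constructor <;> linarith)).trans
          (Measure.le_add_left le_rfl _),
        (atom_le p x₃ (Ico _ _) (by dsimp only [x₃]; constructor <;> linarith)).trans
          (Measure.le_add_right (Measure.le_add_left le_rfl) _)⟩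
  · have h₁ : x₁ ∈ {x : Icc (0 : ℝ) 1 | 1 / 4 ≤ (x : ℝ) ↔ 1 / 4 + 2 * ε ≤ (x : ℝ)} := by
      dsimp only [x₁, mem_ofPred_eq]; constructor <;> intro <;> linarith
    have h₄ : x₄ ∈ {x : Icc (0 : ℝ) 1 | 1 / 4 ≤ (x : ℝ) ↔ 1 / 4 + 2 * ε ≤ (x : ℝ)} := by
      dsimp only [x₄, mem_ofPred_eq]; constructor <;> intro <;> linarith
    calc ENNReal.ofReal (1 - 2 * p) = ENNReal.ofReal (1 - 3 * p) + ENNReal.ofReal p := by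
          rw [← ENNReal.ofReal_add (by linarith) hp]; ring_nf
      _ ≤ _ := by
          simp only [μ, Measure.coe_add, Measure.coe_smul, Pi.add_apply, Pi.smul_apply,
            Measure.dirac_apply_of_mem h₁, Measure.dirac_apply_of_mem h₄, smul_eq_mul, mul_one]
          gcongr
          exact le_self_add.trans le_self_add

theorem stmt_9_general (ε δ p_c : ℝ) (hε : 0 < ε) (hε' : ε < 1 / 4)
    (hδ : 0 < δ)
    (hpc : 0 < p_c) (hpc' : p_c ≤ 1 / (8 * ε)) (m : ℕ) :
    ∃ (D : Measure (↥(Set.Icc (0 : ℝ) 1) × Bool)) (_ : IsProbabilityMeasure D)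
      (q : ↥(Set.Icc (0 : ℝ) 1) → ℝ),
      IsPosterior D q ∧
      ∀ alg : (Fin m → ↥(Set.Icc (0 : ℝ) 1) × Bool) → ℝ,
        Measurable alg → (∀ s, alg s ∈ Set.Ioo (0 : ℝ) 1) →
        ∃ c ∈ Set.Ioo (0 : ℝ) 1,
          ENNReal.ofReal (p_c * ε) ≤
            D.map Prod.fst {x | q x ∈ Set.Ioc c (c + ε)} ∧
          ENNReal.ofReal (p_c * ε) ≤
            D.map Prod.fst {x | q x ∈ Set.Ico (c - ε) c} ∧
          ((m : ℝ) < Real.log (1 / (2 * δ)) / (8 * p_c * ε) →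
            ENNReal.ofReal δ <
              (Measure.pi fun _ : Fin m => D.map Prod.fst)
                {xs | ε ≤ |alg (fun i => (xs i, decide (c ≤ q (xs i)))) - c|}) := by
  have hp : 0 ≤ p_c * ε := by positivity
  have hp' : 4 * (p_c * ε) ≤ 1 := by
    have h8 : 1 / (8 * ε) * ε = 1 / 8 := by field_simp
    nlinarith [mul_le_mul_of_nonneg_right hpc' hε.le]
  obtain ⟨μ, hμ, hwindow, hagree⟩ := exists_measure_Icc_mass_near_thresholds hε hε' hp hp'
  set S : Set (Icc (0 : ℝ) 1) := {x | 1 / 4 ≤ (x : ℝ) ↔ 1 / 4 + 2 * ε ≤ (x : ℝ)}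
  have hq : Measurable (Subtype.val : Icc (0 : ℝ) 1 → ℝ) := measurable_subtype_coe
  have hqI (x : Icc (0 : ℝ) 1) : (x : ℝ) ∈ Icc 0 1 := x.2
  refine ⟨jointLaw μ Subtype.val, isProbabilityMeasure_jointLaw hq hqI, Subtype.val,
    isPosterior_jointLaw hq hqI, fun alg _ _ => ?_⟩
  rw [map_fst_jointLaw hq hqI]
  suffices ∃ c ∈ ({1 / 4, 1 / 4 + 2 * ε} : Set ℝ), (m : ℝ) < Real.log (1 / (2 * δ)) /
      (8 * p_c * ε) → ENNReal.ofReal δ < (Measure.pi fun _ : Fin m => μ)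
        {xs | ε ≤ |alg (fun i => (xs i, decide (c ≤ (xs i : ℝ)))) - c|} by
    obtain ⟨c, hc, h⟩ := this
    exact ⟨c, (hwindow c hc).1, (hwindow c hc).2.1, (hwindow c hc).2.2, h⟩
  by_cases hm : (m : ℝ) < Real.log (1 / (2 * δ)) / (8 * p_c * ε)
  · rw [lt_div_iff₀ (by positivity)] at hm
    have hE := ofReal_two_mul_lt_pi_univ_pi (m := m) hp hp' hδ hagree (by nlinarith)
    have hgap : 2 * ε ≤ |1 / 4 - (1 / 4 + 2 * ε)| := by
      rw [abs_sub_comm, add_sub_cancel_left, abs_of_pos (by positivity)]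
    have hlabels : EqOn
        (fun xs : Fin m → Icc (0 : ℝ) 1 => alg fun i => (xs i, decide (1 / 4 ≤ (xs i : ℝ))))
        (fun xs => alg fun i => (xs i, decide (1 / 4 + 2 * ε ≤ (xs i : ℝ))))
        (univ.pi fun _ => S) :=
      fun xs hxs => by simp only [decide_eq_decide.2 (hxs _ (mem_univ _))]
    rcases two_point_lower_bound _ hlabels hgap hδ.le hE with h | h
    exacts [⟨_, by simp, fun _ => h⟩, ⟨_, by simp, fun _ => h⟩]
  · exact ⟨1 / 4, by simp, fun h => absurd h hm⟩

/-- minimax lower bound for an optimal decision maker. -/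
theorem stmt_9 (ε δ p_c : ℝ) (hε : 0 < ε) (hε' : ε < 1 / 4)
    (hδ : 0 < δ) (hδ' : δ ≤ 1 / 2)
    (hpc : 0 < p_c) (hpc' : p_c ≤ 1 / (8 * ε)) (m : ℕ) :
    ∃ (D : Measure (↥(Set.Icc (0 : ℝ) 1) × Bool)) (_ : IsProbabilityMeasure D)
      (q : ↥(Set.Icc (0 : ℝ) 1) → ℝ),
      IsPosterior D q ∧
      ∀ alg : (Fin m → ↥(Set.Icc (0 : ℝ) 1) × Bool) → ℝ,
        Measurable alg → (∀ s, alg s ∈ Set.Ioo (0 : ℝ) 1) →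
        ∃ c ∈ Set.Ioo (0 : ℝ) 1,
          ENNReal.ofReal (p_c * ε) ≤
            D.map Prod.fst {x | q x ∈ Set.Ioc c (c + ε)} ∧
          ENNReal.ofReal (p_c * ε) ≤
            D.map Prod.fst {x | q x ∈ Set.Ico (c - ε) c} ∧
          ((m : ℝ) < Real.log (1 / (2 * δ)) / (8 * p_c * ε) →
            ENNReal.ofReal δ <
              (Measure.pi fun _ : Fin m => D.map Prod.fst)
                {xs | ε ≤ |alg (fun i => (xs i, decide (c ≤ q (xs i)))) - c|}) :=
  stmt_9_general ε δ p_c hε hε' hδ hpc hpc' m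
end
end

section
/- Fix 0 < ε < 1/4 and a sample size m, and let D be a probability distribution over X × {0,1} with no uncertainty, i.e., q(X) ∈ {0,1} almost surely where q(x) = P(Y = 1 | X = x). Then for every IDT algorithm ĉ : (X × {0,1})^m → (0,1), there exists a loss parameter c ∈ (0,1) such that P(|ĉ(S) − c| ≥ ε) ≥ 1/2, where S is a sample of size m from the Bayes optimal rule h(x) = 1{q(x) ≥ c}. -/
open MeasureTheory ProbabilityTheory Set

noncomputable section

/-- lack of uncertainty precludes identifiability. -/
theorem stmt_10 {X : Type*} [MeasurableSpace X]
    (ε : ℝ) (hε : 0 < ε) (hε' : ε < 1 / 4) (m : ℕ)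
    (D : Measure (X × Bool)) [IsProbabilityMeasure D]
    (q : X → ℝ) (hq : IsPosterior D q)
    (hnounc : D.map Prod.fst {x | q x ≠ 0 ∧ q x ≠ 1} = 0)
    (alg : (Fin m → X × Bool) → ℝ) (halg : Measurable alg)
    (hrange : ∀ s, alg s ∈ Set.Ioo (0 : ℝ) 1) :
    ∃ c ∈ Set.Ioo (0 : ℝ) 1,
      ENNReal.ofReal (1 / 2) ≤
        (Measure.pi fun _ : Fin m => D.map Prod.fst)
          {xs | ε ≤ |alg (fun i => (xs i, decide (c ≤ q (xs i)))) - c|} := by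
  obtain ⟨hqm, -⟩ := hq
  set μ := D.map Prod.fst with hμ
  haveI : IsProbabilityMeasure μ := Measure.isProbabilityMeasure_map measurable_fst.aemeasurable
  set N : Set X := {x | q x ≠ 0 ∧ q x ≠ 1} with hN
  set π := Measure.pi (fun _ : Fin m => μ) with hπ
  set B : Set (Fin m → X) := ⋃ i, Function.eval i ⁻¹' N with hB
  have hBnull : π B = 0 := by
    refine measure_iUnion_null fun i => ?_
    exact Measure.pi_eval_preimage_null _ hnounc
  set g : ℝ → (Fin m → X) → ℝ :=
    fun c xs => alg (fun i => (xs i, decide (c ≤ q (xs i)))) with hg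
  set E : ℝ → Set (Fin m → X) := fun c => {xs | ε ≤ |g c xs - c|} with hE
  -- labels agree off N
  have hlab : ∀ xs : Fin m → X, xs ∉ B → g (1/4) xs = g (3/4) xs := by
    intro xs hxs
    simp only [hB, mem_iUnion, not_exists] at hxs
    have : (fun i => (xs i, decide ((1:ℝ)/4 ≤ q (xs i))))
        = fun i => (xs i, decide ((3:ℝ)/4 ≤ q (xs i))) := by
      funext i
      have h := hxs i
      simp only [Function.eval, mem_preimage, hN, mem_setOf_eq, not_and_or, not_not] at h
      rcases h with h | h <;> simp [h] <;> norm_num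
    simp only [hg]; rw [this]
  have hcover : ∀ xs : Fin m → X, xs ∉ B → xs ∈ E (1/4) ∪ E (3/4) := by
    intro xs hxs
    by_contra hcon
    simp only [mem_union, hE, mem_setOf_eq, not_or, not_le] at hcon
    obtain ⟨h1, h2⟩ := hcon
    rw [hlab xs hxs] at h1
    have : (1:ℝ)/2 ≤ |g (3/4) xs - 1/4| + |g (3/4) xs - 3/4| := by
      have := abs_sub_abs_le_abs_sub (g (3/4) xs - 1/4) (g (3/4) xs - 3/4)
      have h3 : |(g (3/4) xs - 1/4) - (g (3/4) xs - 3/4)| = 1/2 := by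
        norm_num
      calc (1:ℝ)/2 = |(g (3/4) xs - 1/4) - (g (3/4) xs - 3/4)| := h3.symm
        _ ≤ |g (3/4) xs - 1/4| + |g (3/4) xs - 3/4| := abs_sub _ _
    linarith
  have hsum : (1 : ENNReal) ≤ π (E (1/4)) + π (E (3/4)) := by
    have huniv : (univ : Set (Fin m → X)) ⊆ B ∪ (E (1/4) ∪ E (3/4)) := by
      intro xs _
      by_cases hxs : xs ∈ B
      · exact Or.inl hxs
      · exact Or.inr (hcover xs hxs)
    calc (1 : ENNReal) = π univ := (measure_univ).symm
      _ ≤ π (B ∪ (E (1/4) ∪ E (3/4))) := measure_mono huniv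
      _ ≤ π B + π (E (1/4) ∪ E (3/4)) := measure_union_le _ _
      _ ≤ π B + (π (E (1/4)) + π (E (3/4))) := by
          gcongr; exact measure_union_le _ _
      _ = π (E (1/4)) + π (E (3/4)) := by rw [hBnull, zero_add]
  have hhalf : ENNReal.ofReal (1/2) ≤ π (E (1/4)) ∨ ENNReal.ofReal (1/2) ≤ π (E (3/4)) := by
    by_contra hcon
    push_neg at hcon
    obtain ⟨h1, h2⟩ := hcon
    have : π (E (1/4)) + π (E (3/4)) < ENNReal.ofReal (1/2) + ENNReal.ofReal (1/2) :=
      ENNReal.add_lt_add h1 h2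
    rw [← ENNReal.ofReal_add (by norm_num) (by norm_num)] at this
    norm_num at this
    exact absurd (lt_of_le_of_lt hsum this) (by simp)
  rcases hhalf with h | h
  · exact ⟨1/4, by norm_num, h⟩
  · exact ⟨3/4, by norm_num, h⟩
end
end

section
/- Let A, B, and C be events in a probability space with P(A) > 0 and P(B) > 0. Then |P(C | A) − P(C | B)| ≤ (P(A ∧ ¬B) + P(¬A ∧ B)) / min(P(A), P(B)). -/
open MeasureTheory Set

noncomputable section

/-- bound on the difference of conditional probabilities
of an event given two overlapping events. -/
theorem stmt_12 {Ω : Type*} [MeasurableSpace Ω]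
    (P : Measure Ω) [IsProbabilityMeasure P]
    (A B C : Set Ω) (hA : 0 < P A) (hB : 0 < P B) :
    |(P (C ∩ A)).toReal / (P A).toReal - (P (C ∩ B)).toReal / (P B).toReal|
      ≤ ((P (A ∩ Bᶜ)).toReal + (P (Aᶜ ∩ B)).toReal) /
          min (P A).toReal (P B).toReal := by
  have hsub : ∀ s t r : Set Ω, s ⊆ t ∪ r →
      (P s).toReal ≤ (P t).toReal + (P r).toReal := by
    intro s t r h
    rw [← ENNReal.toReal_add (measure_ne_top P t) (measure_ne_top P r)]
    exact ENNReal.toReal_mono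
      (ENNReal.add_ne_top.mpr ⟨measure_ne_top P t, measure_ne_top P r⟩)
      ((measure_mono h).trans (measure_union_le t r))
  have hmono : ∀ s t : Set Ω, s ⊆ t → (P s).toReal ≤ (P t).toReal := by
    intro s t h
    exact ENNReal.toReal_mono (measure_ne_top P t) (measure_mono h)
  set a := (P A).toReal with ha'
  set b := (P B).toReal with hb'
  set x := (P (C ∩ A)).toReal with hx'
  set y := (P (C ∩ B)).toReal with hy'
  set u := (P (A ∩ Bᶜ)).toReal with hu'
  set v := (P (Aᶜ ∩ B)).toReal with hv'
  set z := (P (C ∩ A ∩ B)).toReal with hz'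
  have ha : 0 < a := ENNReal.toReal_pos hA.ne' (measure_ne_top P A)
  have hb : 0 < b := ENNReal.toReal_pos hB.ne' (measure_ne_top P B)
  have hz0 : 0 ≤ z := ENNReal.toReal_nonneg
  have hu0 : 0 ≤ u := ENNReal.toReal_nonneg
  have hv0 : 0 ≤ v := ENNReal.toReal_nonneg
  have h1 : x ≤ z + u := hsub _ _ _ (by
    intro w hw
    by_cases hwb : w ∈ B
    · exact Or.inl ⟨hw, hwb⟩
    · exact Or.inr ⟨hw.2, hwb⟩)
  have h2 : y ≤ z + v := hsub _ _ _ (by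
    intro w hw
    by_cases hwa : w ∈ A
    · exact Or.inl ⟨⟨hw.1, hwa⟩, hw.2⟩
    · exact Or.inr ⟨hwa, hw.2⟩)
  have h3 : z ≤ x := hmono _ _ (inter_subset_left)
  have h4 : z ≤ y := hmono _ _ (fun w hw => ⟨hw.1.1, hw.2⟩)
  have h5 : b ≤ a + v := hsub _ _ _ (by
    intro w hw
    by_cases hwa : w ∈ A
    · exact Or.inl hwa
    · exact Or.inr ⟨hwa, hw⟩)
  have h6 : a ≤ b + u := hsub _ _ _ (by
    intro w hw
    by_cases hwb : w ∈ B
    · exact Or.inl hwb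
    · exact Or.inr ⟨hw, hwb⟩)
  have hza : z ≤ a := hmono _ _ (fun w hw => hw.1.2)
  have hzb : z ≤ b := hmono _ _ (fun w hw => hw.2)
  rcases le_total a b with hab | hab
  · rw [min_eq_left hab, abs_le]
    constructor
    · rw [div_sub_div _ _ ha.ne' hb.ne', neg_le, ← neg_div, div_le_div_iff₀
        (by positivity) ha]
      nlinarith [mul_nonneg (mul_nonneg ha.le ha.le) (sub_nonneg.mpr h2),
        mul_nonneg (mul_nonneg ha.le hb.le) (sub_nonneg.mpr h3),
        mul_nonneg (mul_nonneg ha.le hz0) (sub_nonneg.mpr hab),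
        mul_nonneg (mul_nonneg ha.le hv0) (sub_nonneg.mpr hab),
        mul_nonneg (mul_nonneg ha.le hb.le) hu0]
    · rw [div_sub_div _ _ ha.ne' hb.ne', div_le_div_iff₀ (by positivity) ha]
      nlinarith [mul_nonneg (mul_nonneg ha.le hb.le) (sub_nonneg.mpr h1),
        mul_nonneg (mul_nonneg ha.le ha.le) (sub_nonneg.mpr h4),
        mul_nonneg (mul_nonneg ha.le hz0) (sub_nonneg.mpr (by linarith [h5] : b - a ≤ v)),
        mul_nonneg (mul_nonneg ha.le hv0) (sub_nonneg.mpr hzb)]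
  · rw [min_eq_right hab, abs_le]
    constructor
    · rw [div_sub_div _ _ ha.ne' hb.ne', neg_le, ← neg_div, div_le_div_iff₀
        (by positivity) hb]
      nlinarith [mul_nonneg (mul_nonneg ha.le hb.le) (sub_nonneg.mpr h2),
        mul_nonneg (mul_nonneg hb.le hb.le) (sub_nonneg.mpr h3),
        mul_nonneg (mul_nonneg hb.le hz0) (sub_nonneg.mpr (by linarith [h6] : a - b ≤ u)),
        mul_nonneg (mul_nonneg hb.le hu0) (sub_nonneg.mpr hza)]
    · rw [div_sub_div _ _ ha.ne' hb.ne', div_le_div_iff₀ (by positivity) hb]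
      nlinarith [mul_nonneg (mul_nonneg hb.le hb.le) (sub_nonneg.mpr h1),
        mul_nonneg (mul_nonneg ha.le hb.le) (sub_nonneg.mpr h4),
        mul_nonneg (mul_nonneg hb.le hz0) (sub_nonneg.mpr hab),
        mul_nonneg (mul_nonneg hb.le hu0) (sub_nonneg.mpr hab),
        mul_nonneg (mul_nonneg ha.le hb.le) hv0]
end
end

section
/- Fix 0 < Δ ≤ 1, 0 < ε < 1/4, and a sample size m. For every IDT algorithm ĉ : (X × {0,1})^m → (0,1), there exist a decision problem (D, c) with X = [0,1] satisfying P(q(X) ∈ (c, c + ε]) ≥ Δ·ε and P(q(X) ∈ [c − ε, c)) ≥ Δ·ε, and a measurable decision rule h : X → {0,1} with R_c(h) ≤ inf_{h'} R_c(h') + Δ (infimum over all measurable rules), such that P(|ĉ(S) − c| ≥ ε) ≥ 1/2, where S is a sample of size m from h. -/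
open MeasureTheory ProbabilityTheory Set

noncomputable section

-- Auxiliary definitions and lemmas
abbrev XX := ↥(Set.Icc (0 : ℝ) 1)

def ptA : XX := ⟨0, by norm_num⟩
def ptB : XX := ⟨1, by norm_num⟩

lemma ptA_ne_ptB : ptA ≠ ptB := by
  simp [ptA, ptB, Subtype.ext_iff]

lemma my_integrable_dirac {α : Type*} [MeasurableSpace α] [MeasurableSingletonClass α]
    (f : α → ℝ) (a : α) : Integrable f (Measure.dirac a) :=
  (integrable_const (f a)).congr (ae_eq_dirac f).symm

lemma my_integrable_smul_dirac {α : Type*} [MeasurableSpace α] [MeasurableSingletonClass α]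
    (f : α → ℝ) (a : α) (w : ℝ) :
    Integrable f (ENNReal.ofReal w • Measure.dirac a) :=
  (my_integrable_dirac f a).smul_measure ENNReal.ofReal_ne_top

lemma integral_smul_dirac {α : Type*} [MeasurableSpace α] [MeasurableSingletonClass α]
    (f : α → ℝ) (a : α) (w : ℝ) (hw : 0 ≤ w) :
    ∫ x, f x ∂(ENNReal.ofReal w • Measure.dirac a) = w * f a := by
  rw [integral_smul_measure, integral_dirac, ENNReal.toReal_ofReal hw, smul_eq_mul]

/-- The distribution with X-marginal uniform on {ptA, ptB} and posterior p₁ at ptA, p₂ at ptB. -/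
def bigD (p₁ p₂ : ℝ) : Measure (XX × Bool) :=
  ENNReal.ofReal (p₁ / 2) • Measure.dirac (ptA, true)
    + ENNReal.ofReal ((1 - p₁) / 2) • Measure.dirac (ptA, false)
    + ENNReal.ofReal (p₂ / 2) • Measure.dirac (ptB, true)
    + ENNReal.ofReal ((1 - p₂) / 2) • Measure.dirac (ptB, false)

def muX : Measure XX :=
  ENNReal.ofReal (1 / 2) • Measure.dirac ptA + ENNReal.ofReal (1 / 2) • Measure.dirac ptB

lemma integral_bigD {p₁ p₂ : ℝ} (h₁ : 0 ≤ p₁) (h₁' : p₁ ≤ 1) (h₂ : 0 ≤ p₂) (h₂' : p₂ ≤ 1)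
    (f : XX × Bool → ℝ) :
    ∫ z, f z ∂(bigD p₁ p₂) = (p₁ / 2) * f (ptA, true) + ((1 - p₁) / 2) * f (ptA, false)
      + (p₂ / 2) * f (ptB, true) + ((1 - p₂) / 2) * f (ptB, false) := by
  have I := fun (a : XX × Bool) (w : ℝ) => my_integrable_smul_dirac f a w
  rw [bigD, integral_add_measure (((I _ _).add_measure (I _ _)).add_measure (I _ _)) (I _ _),
    integral_add_measure ((I _ _).add_measure (I _ _)) (I _ _),
    integral_add_measure (I _ _) (I _ _),
    integral_smul_dirac f _ _ (by linarith), integral_smul_dirac f _ _ (by linarith),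
    integral_smul_dirac f _ _ (by linarith), integral_smul_dirac f _ _ (by linarith)]

lemma bigD_map_fst {p₁ p₂ : ℝ} (h₁ : 0 ≤ p₁) (h₁' : p₁ ≤ 1) (h₂ : 0 ≤ p₂) (h₂' : p₂ ≤ 1) :
    (bigD p₁ p₂).map Prod.fst = muX := by
  rw [bigD, Measure.map_add _ _ measurable_fst, Measure.map_add _ _ measurable_fst,
    Measure.map_add _ _ measurable_fst, Measure.map_smul, Measure.map_smul, Measure.map_smul,
    Measure.map_smul, Measure.map_dirac' measurable_fst, Measure.map_dirac' measurable_fst,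
    Measure.map_dirac' measurable_fst, Measure.map_dirac' measurable_fst]
  show _ • Measure.dirac ptA + _ • Measure.dirac ptA + _ • Measure.dirac ptB
      + _ • Measure.dirac ptB = muX
  rw [muX, ← add_smul, add_assoc, ← add_smul, ← ENNReal.ofReal_add (by linarith) (by linarith),
    ← ENNReal.ofReal_add (by linarith) (by linarith),
    show p₁ / 2 + (1 - p₁) / 2 = 1 / 2 by ring, show p₂ / 2 + (1 - p₂) / 2 = 1 / 2 by ring]

lemma bigD_prob {p₁ p₂ : ℝ} (h₁ : 0 ≤ p₁) (h₁' : p₁ ≤ 1) (h₂ : 0 ≤ p₂) (h₂' : p₂ ≤ 1) :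
    IsProbabilityMeasure (bigD p₁ p₂) := by
  constructor
  rw [bigD]
  simp only [Measure.add_apply, Measure.smul_apply, Measure.dirac_apply_of_mem (Set.mem_univ _),
    smul_eq_mul, mul_one]
  rw [← ENNReal.ofReal_add (by linarith) (by linarith),
    ← ENNReal.ofReal_add (by linarith) (by linarith),
    ← ENNReal.ofReal_add (by linarith) (by linarith),
    show p₁ / 2 + (1 - p₁) / 2 + p₂ / 2 + (1 - p₂) / 2 = 1 by ring, ENNReal.ofReal_one]

lemma muX_prob : IsProbabilityMeasure muX := by
  constructor
  rw [muX]
  simp only [Measure.add_apply, Measure.smul_apply, Measure.dirac_apply_of_mem (Set.mem_univ _),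
    smul_eq_mul, mul_one]
  rw [← ENNReal.ofReal_add (by norm_num) (by norm_num)]
  norm_num

lemma le_muX_of_memA {S : Set XX} (hS : ptA ∈ S) : ENNReal.ofReal (1 / 2) ≤ muX S := by
  rw [muX]
  calc ENNReal.ofReal (1 / 2) = (ENNReal.ofReal (1 / 2) • Measure.dirac ptA) S := by
        rw [Measure.smul_apply, Measure.dirac_apply_of_mem hS, smul_eq_mul, mul_one]
    _ ≤ _ := le_add_right le_rfl

lemma le_muX_of_memB {S : Set XX} (hS : ptB ∈ S) : ENNReal.ofReal (1 / 2) ≤ muX S := by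
  rw [muX]
  calc ENNReal.ofReal (1 / 2) = (ENNReal.ofReal (1 / 2) • Measure.dirac ptB) S := by
        rw [Measure.smul_apply, Measure.dirac_apply_of_mem hS, smul_eq_mul, mul_one]
    _ ≤ _ := le_add_left le_rfl

def qfun (p₁ p₂ : ℝ) : XX → ℝ := fun x => if x = ptA then p₁ else p₂

lemma measurable_qfun (p₁ p₂ : ℝ) : Measurable (qfun p₁ p₂) := by
  unfold qfun
  exact Measurable.ite (by simp [Set.setOf_eq_eq_singleton]) measurable_const measurable_const

lemma toReal_two (a b : ℝ) (ha : 0 ≤ a) (hb : 0 ≤ b) :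
    (ENNReal.ofReal a + ENNReal.ofReal b).toReal = a + b := by
  rw [← ENNReal.ofReal_add ha hb, ENNReal.toReal_ofReal (by linarith)]

lemma isPosterior_bigD {p₁ p₂ : ℝ} (h₁ : 0 ≤ p₁) (h₁' : p₁ ≤ 1) (h₂ : 0 ≤ p₂) (h₂' : p₂ ≤ 1) :
    IsPosterior (bigD p₁ p₂) (qfun p₁ p₂) := by
  refine ⟨measurable_qfun _ _, fun A hA => ?_⟩
  classical
  have eAf : Measure.dirac ((ptA, false) : XX × Bool) (A ×ˢ ({true} : Set Bool)) = 0 := by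
    rw [Measure.dirac_apply' _ (hA.prod (measurableSet_singleton true))]
    simp [Set.indicator_apply]
  have eBf : Measure.dirac ((ptB, false) : XX × Bool) (A ×ˢ ({true} : Set Bool)) = 0 := by
    rw [Measure.dirac_apply' _ (hA.prod (measurableSet_singleton true))]
    simp [Set.indicator_apply]
  have eAt : Measure.dirac ((ptA, true) : XX × Bool) (A ×ˢ ({true} : Set Bool))
      = if ptA ∈ A then 1 else 0 := by
    rw [Measure.dirac_apply' _ (hA.prod (measurableSet_singleton true))]
    by_cases h : ptA ∈ A <;> simp [Set.indicator_apply, h]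
  have eBt : Measure.dirac ((ptB, true) : XX × Bool) (A ×ˢ ({true} : Set Bool))
      = if ptB ∈ A then 1 else 0 := by
    rw [Measure.dirac_apply' _ (hA.prod (measurableSet_singleton true))]
    by_cases h : ptB ∈ A <;> simp [Set.indicator_apply, h]
  rw [bigD_map_fst h₁ h₁' h₂ h₂', muX, Measure.restrict_add, Measure.restrict_smul,
    Measure.restrict_smul,
    integral_add_measure
      (((my_integrable_dirac _ _).restrict).smul_measure ENNReal.ofReal_ne_top)
      (((my_integrable_dirac _ _).restrict).smul_measure ENNReal.ofReal_ne_top),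
    integral_smul_measure, integral_smul_measure, setIntegral_dirac, setIntegral_dirac,
    ENNReal.toReal_ofReal (by norm_num : (0:ℝ) ≤ 1 / 2)]
  rw [bigD]
  simp only [Measure.add_apply, Measure.smul_apply, smul_eq_mul, eAf, eBf, eAt, eBt,
    mul_zero, add_zero]
  by_cases hAa : ptA ∈ A <;> by_cases hAb : ptB ∈ A <;>
    simp only [hAa, hAb, if_true, if_false, mul_one, mul_zero, add_zero, zero_add,
      ENNReal.toReal_ofReal (by linarith : (0:ℝ) ≤ p₁ / 2),
      ENNReal.toReal_ofReal (by linarith : (0:ℝ) ≤ p₂ / 2),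
      ENNReal.toReal_zero, qfun, ptA_ne_ptB.symm, smul_eq_mul] <;>
    first
      | (rw [toReal_two _ _ (by linarith) (by linarith)]; ring)
      | ring
      | simp

def hfun : XX → Bool := fun x => if x = ptA then true else false

lemma measurable_hfun : Measurable hfun := by
  unfold hfun
  exact Measurable.ite (by simp [Set.setOf_eq_eq_singleton]) measurable_const measurable_const

lemma risk_bigD {p₁ p₂ : ℝ} (h₁ : 0 ≤ p₁) (h₁' : p₁ ≤ 1) (h₂ : 0 ≤ p₂) (h₂' : p₂ ≤ 1)
    (c : ℝ) (h' : XX → Bool) :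
    risk (bigD p₁ p₂) c h' = (p₁ / 2) * idtLoss c (h' ptA) true
      + ((1 - p₁) / 2) * idtLoss c (h' ptA) false
      + (p₂ / 2) * idtLoss c (h' ptB) true
      + ((1 - p₂) / 2) * idtLoss c (h' ptB) false := by
  rw [risk, integral_bigD h₁ h₁' h₂ h₂']

lemma risk_hfun_le {c ε : ℝ} (hε : 0 < ε) (hc : 0 < c - ε) (hc' : c + ε < 1)
    (h' : XX → Bool) :
    risk (bigD (c + ε) (c - ε)) c hfun ≤ risk (bigD (c + ε) (c - ε)) c h' := by
  rw [risk_bigD (by linarith) (by linarith) (by linarith) (by linarith),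
    risk_bigD (by linarith) (by linarith) (by linarith) (by linarith)]
  have hA : hfun ptA = true := by simp [hfun]
  have hB : hfun ptB = false := by simp [hfun, ptA_ne_ptB.symm]
  rw [hA, hB]
  cases hA' : h' ptA <;> cases hB' : h' ptB <;>
    simp only [idtLoss, if_true, if_false, Bool.true_eq_false, Bool.false_eq_true,
      reduceIte] <;>
    nlinarith

/-- the loss cannot always be identified for
close-to-optimal decision rules. -/
theorem stmt_13 (Δ ε : ℝ) (hΔ : 0 < Δ) (hΔ' : Δ ≤ 1)
    (hε : 0 < ε) (hε' : ε < 1 / 4) (m : ℕ)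
    (alg : (Fin m → ↥(Set.Icc (0 : ℝ) 1) × Bool) → ℝ) (halg : Measurable alg)
    (hrange : ∀ s, alg s ∈ Set.Ioo (0 : ℝ) 1) :
    ∃ (D : Measure (↥(Set.Icc (0 : ℝ) 1) × Bool)) (_ : IsProbabilityMeasure D)
      (q : ↥(Set.Icc (0 : ℝ) 1) → ℝ) (c : ℝ) (h : ↥(Set.Icc (0 : ℝ) 1) → Bool),
      IsPosterior D q ∧
      c ∈ Set.Ioo (0 : ℝ) 1 ∧
      Measurable h ∧
      ENNReal.ofReal (Δ * ε) ≤ D.map Prod.fst {x | q x ∈ Set.Ioc c (c + ε)} ∧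
      ENNReal.ofReal (Δ * ε) ≤ D.map Prod.fst {x | q x ∈ Set.Ico (c - ε) c} ∧
      risk D c h ≤
        sInf {r : ℝ | ∃ h' : ↥(Set.Icc (0 : ℝ) 1) → Bool,
          Measurable h' ∧ r = risk D c h'} + Δ ∧
      ENNReal.ofReal (1 / 2) ≤
        (Measure.pi fun _ : Fin m => D.map Prod.fst)
          {xs | ε ≤ |alg (fun i => (xs i, h (xs i))) - c|} := by
  haveI := muX_prob
  set P : Measure (Fin m → XX) := Measure.pi fun _ : Fin m => muX with hP
  -- the two candidate values of c
  set c₁ : ℝ := 1 / 4 with hc₁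
  set c₂ : ℝ := 1 / 4 + 2 * ε with hc₂
  set E : ℝ → Set (Fin m → XX) :=
    fun c => {xs | ε ≤ |alg (fun i => (xs i, hfun (xs i))) - c|} with hE
  -- at least one candidate fools the algorithm with probability ≥ 1/2
  have hcover : (Set.univ : Set (Fin m → XX)) ⊆ E c₁ ∪ E c₂ := by
    intro xs _
    by_contra hxs
    simp only [Set.mem_union, hE, Set.mem_setOf_eq, not_or, not_le] at hxs
    obtain ⟨u1, u2⟩ := hxs
    rw [abs_lt] at u1 u2
    simp only [hc₁, hc₂] at u1 u2
    linarith [u1.1, u1.2, u2.1, u2.2]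
  have hkey : ENNReal.ofReal (1 / 2) ≤ P (E c₁) ∨ ENNReal.ofReal (1 / 2) ≤ P (E c₂) := by
    by_contra hno
    push_neg at hno
    have h1 : (1 : ENNReal) ≤ P (E c₁) + P (E c₂) := by
      calc (1 : ENNReal) = P Set.univ := (measure_univ).symm
        _ ≤ P (E c₁ ∪ E c₂) := measure_mono hcover
        _ ≤ P (E c₁) + P (E c₂) := measure_union_le _ _
    have h2 : P (E c₁) + P (E c₂) < 1 := by
      calc P (E c₁) + P (E c₂) < ENNReal.ofReal (1 / 2) + ENNReal.ofReal (1 / 2) :=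
            ENNReal.add_lt_add hno.1 hno.2
        _ = 1 := by rw [← ENNReal.ofReal_add (by norm_num) (by norm_num)]; norm_num
    exact absurd (lt_of_le_of_lt h1 h2) (lt_irrefl _)
  -- properties valid for either candidate
  have main : ∀ c : ℝ, 0 < c - ε → c + ε < 1 → ENNReal.ofReal (1 / 2) ≤ P (E c) →
      ∃ (D : Measure (↥(Set.Icc (0 : ℝ) 1) × Bool)) (_ : IsProbabilityMeasure D)
        (q : ↥(Set.Icc (0 : ℝ) 1) → ℝ) (c : ℝ) (h : ↥(Set.Icc (0 : ℝ) 1) → Bool),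
        IsPosterior D q ∧
        c ∈ Set.Ioo (0 : ℝ) 1 ∧
        Measurable h ∧
        ENNReal.ofReal (Δ * ε) ≤ D.map Prod.fst {x | q x ∈ Set.Ioc c (c + ε)} ∧
        ENNReal.ofReal (Δ * ε) ≤ D.map Prod.fst {x | q x ∈ Set.Ico (c - ε) c} ∧
        risk D c h ≤
          sInf {r : ℝ | ∃ h' : ↥(Set.Icc (0 : ℝ) 1) → Bool,
            Measurable h' ∧ r = risk D c h'} + Δ ∧
        ENNReal.ofReal (1 / 2) ≤
          (Measure.pi fun _ : Fin m => D.map Prod.fst)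
            {xs | ε ≤ |alg (fun i => (xs i, h (xs i))) - c|} := by
    intro c hca hcb hprob
    have b1 : (0:ℝ) ≤ c + ε := by linarith
    have b2 : c + ε ≤ 1 := by linarith
    have b3 : (0:ℝ) ≤ c - ε := by linarith
    have b4 : c - ε ≤ 1 := by linarith
    have hmap : (bigD (c + ε) (c - ε)).map Prod.fst = muX := bigD_map_fst b1 b2 b3 b4
    refine ⟨bigD (c + ε) (c - ε), bigD_prob b1 b2 b3 b4, qfun (c + ε) (c - ε), c, hfun,
      isPosterior_bigD b1 b2 b3 b4, ⟨by linarith, by linarith⟩, measurable_hfun, ?_, ?_, ?_, ?_⟩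
    · rw [hmap]
      refine le_trans (ENNReal.ofReal_le_ofReal ?_) (le_muX_of_memA ?_)
      · nlinarith
      · have hq : qfun (c + ε) (c - ε) ptA = c + ε := by simp [qfun]
        simp only [Set.mem_setOf_eq, hq, Set.mem_Ioc]
        exact ⟨by linarith, le_rfl⟩
    · rw [hmap]
      refine le_trans (ENNReal.ofReal_le_ofReal ?_) (le_muX_of_memB ?_)
      · nlinarith
      · have hq : qfun (c + ε) (c - ε) ptB = c - ε := by simp [qfun, ptA_ne_ptB.symm]
        simp only [Set.mem_setOf_eq, hq, Set.mem_Ico]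
        exact ⟨le_rfl, by linarith⟩
    · have hmem : risk (bigD (c + ε) (c - ε)) c hfun ∈
          {r : ℝ | ∃ h' : XX → Bool, Measurable h' ∧ r = risk (bigD (c + ε) (c - ε)) c h'} :=
        ⟨hfun, measurable_hfun, rfl⟩
      have hlb : risk (bigD (c + ε) (c - ε)) c hfun ≤
          sInf {r : ℝ | ∃ h' : XX → Bool,
            Measurable h' ∧ r = risk (bigD (c + ε) (c - ε)) c h'} := by
        apply le_csInf ⟨_, hmem⟩
        rintro r ⟨h', _, rfl⟩
        exact risk_hfun_le hε hca hcb h'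
      linarith
    · rw [hmap]
      exact hprob
  rcases hkey with hk | hk
  · exact main c₁ (by simp only [hc₁]; linarith) (by simp only [hc₁]; linarith) hk
  · exact main c₂ (by simp only [hc₂]; linarith) (by simp only [hc₂]; linarith) hk
end
end

section
/- Let D be a probability distribution over ℝⁿ × {0,1}, and for each subset S ⊆ {1, ..., n} let q_S(x) = P(Y = 1 | X_S = x_S) denote (a regular version of) the conditional probability that Y = 1 given the coordinates of X in S. For s ≥ 1, consider the function class F = {x ↦ 1{q_S(x) ≥ c} : S ⊆ {1, ..., n}, |S| ≤ s, c ∈ [0,1]}. Then the VC dimension of F is at most 1 + 2·s·log₂(n + 1); equivalently, no set of more than 1 + 2·s·log₂(n + 1) points in ℝⁿ is shattered by F. -/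
open MeasureTheory ProbabilityTheory Set

noncomputable section

/-- Minimum disagreement between a rule `h` and a hypothesis class `H'`. -/
def MDis {X : Type*} [MeasurableSpace X] (D : Measure (X × Bool)) (h : X → Bool)
    (H' : Set (X → Bool)) : ENNReal :=
  ⨅ h' ∈ H', D.map Prod.fst {x | h' x ≠ h x}

/-- `(hfam c, 𝓗)` is `α`-MD-smooth (where `hfam c'` is an optimal rule in the observed
decision maker's class for loss parameter `c'`). -/
def MDSmooth {X : Type*} [MeasurableSpace X] (D : Measure (X × Bool))
    (𝓗 : Set (Set (X → Bool))) (hfam : ℝ → (X → Bool)) (c α : ℝ) : Prop :=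
  (∀ H' ∈ 𝓗, ClassMonotone (optSubset D H')) ∧
  ∀ H' ∈ 𝓗, ∀ c' ∈ Set.Ioo (0 : ℝ) 1,
    MDis D (hfam c') (optSubset D H') ≤
      ENNReal.ofReal (1 + α * |c' - c|) * MDis D (hfam c) (optSubset D H')

/-- `F` shatters the finite set `A` of points. -/
def Shatters {X : Type*} (F : Set (X → Bool)) (A : Finset X) : Prop :=
  ∀ g : X → Bool, ∃ f ∈ F, ∀ x ∈ A, f x = g x

/-!
For a fixed feature set `S`, the traces on a finite set `A` of the rules `x ↦ 1{c ≤ q_S x}` are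
nested, so each is determined by the number of points of `A` it selects. Hence the class has at
most `K * (|A| + 1)` traces on `A`, with `K = (n + 1) ^ s`, while shattering needs `2 ^ |A|` of
them. Finally `2 ^ m ≤ K (m + 1)` forces `2 ^ m ≤ 2 K ^ 2`, i.e. `m ≤ 1 + 2 log₂ K`.
-/

open scoped Finset

section Thresholds

variable {X ι β : Type*} [LinearOrder β]

def thresholdClass (q : ι → X → β) (I : Finset ι) : Set (X → Bool) :=
  {h | ∃ i ∈ I, ∃ c : β, h = fun x => decide (c ≤ q i x)}

theorem Shatters.mono {F G : Set (X → Bool)} {A : Finset X} (hFG : F ⊆ G) (hF : Shatters F A) :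
    Shatters G A := fun g =>
  let ⟨f, hf, hfg⟩ := hF g
  ⟨f, hFG hf, hfg⟩

theorem Shatters.exists_filter_eq [DecidableEq X] {F : Set (X → Bool)} {A B : Finset X}
    (hF : Shatters F A) (hB : B ⊆ A) : ∃ f ∈ F, {x ∈ A | f x = true} = B := by
  obtain ⟨f, hf, hfB⟩ := hF (fun x => decide (x ∈ B))
  refine ⟨f, hf, Finset.ext fun x => ?_⟩
  simp only [Finset.mem_filter]
  constructor
  · rintro ⟨hxA, hfx⟩
    simpa [hfB x hxA] using hfx
  · intro hxB
    exact ⟨hB hxB, by simp [hfB x (hB hxB), hxB]⟩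

theorem Finset.filter_le_eq_of_card_eq (f : X → β) (A : Finset X) {c c' : β}
    (h : #{x ∈ A | c ≤ f x} = #{x ∈ A | c' ≤ f x}) :
    {x ∈ A | c ≤ f x} = {x ∈ A | c' ≤ f x} := by
  rcases le_total c c' with hc | hc
  · exact (eq_of_subset_of_card_le
      (monotone_filter_right A fun _ _ hx => hc.trans hx) h.le).symm
  · exact eq_of_subset_of_card_le (monotone_filter_right A fun _ _ hx => hc.trans hx) h.ge

theorem two_pow_card_le_of_shatters_thresholdClass [DecidableEq X] {q : ι → X → β}
    {I : Finset ι} {A : Finset X} (hA : Shatters (thresholdClass q I) A) :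
    2 ^ #A ≤ #I * (#A + 1) := by
  have hrep : ∀ B ∈ A.powerset, ∃ i ∈ I, ∃ c, {x ∈ A | c ≤ q i x} = B := by
    intro B hB
    obtain ⟨f, ⟨i, hi, c, rfl⟩, hfB⟩ := hA.exists_filter_eq (Finset.mem_powerset.mp hB)
    exact ⟨i, hi, c, by simpa using hfB⟩
  obtain ⟨i₀, -⟩ := hrep ∅ (Finset.empty_mem_powerset A)
  have : Nonempty ι := ⟨i₀⟩
  choose! i hi c hc using hrep
  calc 2 ^ #A = #A.powerset := (Finset.card_powerset A).symm
    _ ≤ #(I ×ˢ Finset.range (#A + 1)) := by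
      refine Finset.card_le_card_of_injOn (fun B => (i B, #B)) (fun B hB => ?_)
        (fun B hB B' hB' h => ?_)
      · simpa [Nat.lt_succ_iff, hi B hB] using Finset.card_le_card (Finset.mem_powerset.mp hB)
      · obtain ⟨hiB, hcard⟩ := Prod.ext_iff.mp h
        dsimp only at hiB hcard
        calc B = {x ∈ A | c B hB ≤ q (i B') x} := by rw [← hiB, hc B hB]
          _ = {x ∈ A | c B' hB' ≤ q (i B') x} :=
            Finset.filter_le_eq_of_card_eq _ A (by rw [← hiB, hc B hB, hiB, hc B' hB', hcard])
          _ = B' := hc B' hB'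
    _ = #I * (#A + 1) := by rw [Finset.card_product, Finset.card_range]

end Thresholds

theorem Finset.card_filter_card_le_le_pow (α : Type*) [Fintype α] (s : ℕ) :
    #{S : Finset α | #S ≤ s} ≤ (Fintype.card α + 1) ^ s := by
  classical
  calc #{S : Finset α | #S ≤ s} ≤ #(univ : Finset (Fin s → Option α)) := by
        refine card_le_card_of_injOn (fun S i => S.toList[(i : ℕ)]?) (by simp)
          (fun S hS T hT h => ?_)
        simp only [coe_filter, mem_univ, true_and, Set.mem_ofPred_eq] at hS hT
        rw [← toList_toFinset S, ← toList_toFinset T]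
        congr 1
        refine List.ext_getElem? fun k => ?_
        rcases lt_or_ge k s with hk | hk
        · exact congrFun h ⟨k, hk⟩
        · rw [List.getElem?_eq_none (by simpa using hS.trans hk),
            List.getElem?_eq_none (by simpa using hT.trans hk)]
    _ = (Fintype.card α + 1) ^ s := by simp

theorem Nat.mul_succ_lt_two_pow_succ (m : ℕ) : m * (m + 1) < 2 ^ (m + 1) := by
  induction m with
  | zero => simp
  | succ k ih =>
    have := Nat.lt_two_pow_self (n := k)
    rw [pow_succ, pow_succ] at *
    nlinarith

-- If `2 * K ≤ m`, then `2 ^ (m + 1) ≤ 2 * K * (m + 1) ≤ m * (m + 1) < 2 ^ (m + 1)`.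
theorem Nat.two_pow_le_two_mul_sq_of_two_pow_le_mul_succ {m K : ℕ} (h : 2 ^ m ≤ K * (m + 1)) :
    2 ^ m ≤ 2 * K ^ 2 := by
  rcases le_or_gt (m + 1) (2 * K) with hm | hm
  · nlinarith
  · have hmK : 2 * K * (m + 1) ≤ m * (m + 1) := Nat.mul_le_mul_right _ (by omega)
    have := Nat.mul_succ_lt_two_pow_succ m
    rw [pow_succ] at this
    nlinarith

theorem le_one_add_two_mul_logb_of_two_pow_le {m K : ℕ} (h : 2 ^ m ≤ K * (m + 1)) :
    (m : ℝ) ≤ 1 + 2 * Real.logb 2 K := by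
  have hK : K ≠ 0 := by
    rintro rfl
    simp at h
  have h2 : (2 : ℝ) ^ m ≤ 2 * (K : ℝ) ^ 2 := by
    exact_mod_cast Nat.two_pow_le_two_mul_sq_of_two_pow_le_mul_succ h
  calc (m : ℝ) = Real.logb 2 (2 ^ m) := by simp [Real.logb_pow]
    _ ≤ Real.logb 2 (2 * (K : ℝ) ^ 2) := Real.logb_le_logb_of_le one_lt_two (by positivity) h2
    _ = 1 + 2 * Real.logb 2 K := by
      rw [Real.logb_mul two_ne_zero (pow_ne_zero 2 (Nat.cast_ne_zero.mpr hK)),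
        Real.logb_self_eq_one one_lt_two, Real.logb_pow]
      push_cast
      ring

theorem stmt_17_general (n : ℕ) (s : ℕ) (qS : Finset (Fin n) → (Fin n → ℝ) → ℝ) :
    ∀ A : Finset (Fin n → ℝ),
      Shatters {h : (Fin n → ℝ) → Bool |
          ∃ (S : Finset (Fin n)) (c : ℝ), S.card ≤ s ∧ c ∈ Set.Icc (0 : ℝ) 1 ∧
            h = fun x => decide (c ≤ qS S x)} A →
      (A.card : ℝ) ≤ 1 + 2 * s * Real.logb 2 ((n : ℝ) + 1) := by
  classical
  intro A hA
  have hA' : Shatters (thresholdClass qS {S | #S ≤ s}) A := hA.mono <| by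
    rintro h ⟨S, c, hS, -, rfl⟩
    exact ⟨S, by simpa using hS, c, rfl⟩
  have hcount := two_pow_card_le_of_shatters_thresholdClass hA'
  have hbound := le_one_add_two_mul_logb_of_two_pow_le
    (hcount.trans (Nat.mul_le_mul_right _ (Finset.card_filter_card_le_le_pow (Fin n) s)))
  simpa [Real.logb_pow, mul_assoc] using hbound

/-- VC dimension of threshold rules on conditional probabilities
given at most `s` of `n` features is at most `1 + 2 s log₂(n+1)`. -/
theorem stmt_17 (n : ℕ) (D : Measure ((Fin n → ℝ) × Bool)) [IsProbabilityMeasure D]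
    (s : ℕ) (hs : 1 ≤ s)
    (qS : Finset (Fin n) → (Fin n → ℝ) → ℝ)
    (hqS : ∀ S : Finset (Fin n),
      (fun p : (Fin n → ℝ) × Bool => qS S p.1) =ᵐ[D]
        D[(fun p : (Fin n → ℝ) × Bool => if p.2 = true then (1 : ℝ) else 0) |
          MeasurableSpace.comap
            (fun p : (Fin n → ℝ) × Bool => fun i : Fin n => if i ∈ S then p.1 i else 0)
            inferInstance]) :
    ∀ A : Finset (Fin n → ℝ),
      Shatters {h : (Fin n → ℝ) → Bool |
          ∃ (S : Finset (Fin n)) (c : ℝ), S.card ≤ s ∧ c ∈ Set.Icc (0 : ℝ) 1 ∧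
            h = fun x => decide (c ≤ qS S x)} A →
      (A.card : ℝ) ≤ 1 + 2 * s * Real.logb 2 ((n : ℝ) + 1) :=
  stmt_17_general n s qS
end
end
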